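/- arXiv:2006.03538 — 2 statements merged into one kernel-verified Lean document; each statement's English description precedes it below -/
import Mathlib

section
/- Let u = (u₁,u₂), v = (v₁,v₂) be linearly independent unit vectors in ℝ² and let f = (f₁, f₂) be a vector field on ℝ² with f₁, f₂ ∈ C²_c(ℝ²). Then for every x ∈ ℝ², X_u f₂(x) - X_v f₂(x) = ∂(J f)/∂x₁ (x) - u₂ · X¹_u(div f)(x) + v₂ · X¹_v(div f)(x). -/
open MeasureTheory Matrix

noncomputable section

/-- Dot product on ℝ². -/
def dot2 (u v : ℝ × ℝ) : ℝ := u.1 * v.1 + u.2 * v.2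

/-- `x^⊥ = (-x₂, x₁)`. -/
def perp2 (x : ℝ × ℝ) : ℝ × ℝ := (-x.2, x.1)

/-- Divergent beam transform `X_u h (x) = ∫₀^∞ h(x + t u) dt`. -/
def Xbeam (u : ℝ × ℝ) (h : ℝ × ℝ → ℝ) (x : ℝ × ℝ) : ℝ :=
  ∫ t in Set.Ioi (0 : ℝ), h (x + t • u)

/-- First moment divergent beam transform `X¹_u h (x) = ∫₀^∞ t h(x + t u) dt`. -/
def Xmom (u : ℝ × ℝ) (h : ℝ × ℝ → ℝ) (x : ℝ × ℝ) : ℝ :=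
  ∫ t in Set.Ioi (0 : ℝ), t * h (x + t • u)

/-- Directional derivative `D_u h = u · ∇ h`. -/
def Ddir (u : ℝ × ℝ) (h : ℝ × ℝ → ℝ) (x : ℝ × ℝ) : ℝ := fderiv ℝ h x u

/-- Twice continuously differentiable, compactly supported. -/
def IsC2c (h : ℝ × ℝ → ℝ) : Prop := ContDiff ℝ 2 h ∧ HasCompactSupport h

/-- `div f = ∂f₁/∂x₁ + ∂f₂/∂x₂`. -/
def divf (f₁ f₂ : ℝ × ℝ → ℝ) (x : ℝ × ℝ) : ℝ :=
  fderiv ℝ f₁ x (1, 0) + fderiv ℝ f₂ x (0, 1)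

/-- `curl f = ∂f₂/∂x₁ - ∂f₁/∂x₂`. -/
def curlf (f₁ f₂ : ℝ × ℝ → ℝ) (x : ℝ × ℝ) : ℝ :=
  fderiv ℝ f₂ x (1, 0) - fderiv ℝ f₁ x (0, 1)

/-- Longitudinal V-line transform `L f = -X_u (f·u) + X_v (f·v)`. -/
def VlineL (u v : ℝ × ℝ) (f₁ f₂ : ℝ × ℝ → ℝ) (x : ℝ × ℝ) : ℝ :=
  - Xbeam u (fun y => f₁ y * u.1 + f₂ y * u.2) x
  + Xbeam v (fun y => f₁ y * v.1 + f₂ y * v.2) x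

/-- Transverse V-line transform `T f = -X_u (f·u^⊥) + X_v (f·v^⊥)`. -/
def VlineT (u v : ℝ × ℝ) (f₁ f₂ : ℝ × ℝ → ℝ) (x : ℝ × ℝ) : ℝ :=
  - Xbeam u (fun y => f₁ y * (perp2 u).1 + f₂ y * (perp2 u).2) x
  + Xbeam v (fun y => f₁ y * (perp2 v).1 + f₂ y * (perp2 v).2) x

/-- First moment longitudinal V-line transform `I f = -X¹_u (f·u) + X¹_v (f·v)`. -/
def VmomL (u v : ℝ × ℝ) (f₁ f₂ : ℝ × ℝ → ℝ) (x : ℝ × ℝ) : ℝ :=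
  - Xmom u (fun y => f₁ y * u.1 + f₂ y * u.2) x
  + Xmom v (fun y => f₁ y * v.1 + f₂ y * v.2) x

/-- First moment transverse V-line transform `J f = -X¹_u (f·u^⊥) + X¹_v (f·v^⊥)`. -/
def VmomT (u v : ℝ × ℝ) (f₁ f₂ : ℝ × ℝ → ℝ) (x : ℝ × ℝ) : ℝ :=
  - Xmom u (fun y => f₁ y * (perp2 u).1 + f₂ y * (perp2 u).2) x
  + Xmom v (fun y => f₁ y * (perp2 v).1 + f₂ y * (perp2 v).2) x

/-- Radon transform `R h (ψ, s) = ∫_ℝ h (s ψ + t ψ^⊥) dt`. -/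
def Radon2 (h : ℝ × ℝ → ℝ) (ψ : ℝ × ℝ) (s : ℝ) : ℝ :=
  ∫ t : ℝ, h (s • ψ + t • perp2 ψ)

/-- The (vector-valued) star transform. -/
def starS (m : ℕ) (γ : Fin m → ℝ × ℝ) (c : Fin m → ℝ)
    (f₁ f₂ : ℝ × ℝ → ℝ) (x : ℝ × ℝ) : ℝ × ℝ :=
  ∑ i, c i •
    (Xbeam (γ i) (fun y => f₁ y * (γ i).1 + f₂ y * (γ i).2) x,
     Xbeam (γ i) (fun y => f₁ y * (perp2 (γ i)).1 + f₂ y * (perp2 (γ i)).2) x)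

/-- `γ(ψ) = -∑ cᵢ γᵢ / (ψ·γᵢ)`. -/
def starGamma (m : ℕ) (γ : Fin m → ℝ × ℝ) (c : Fin m → ℝ) (ψ : ℝ × ℝ) : ℝ × ℝ :=
  - ∑ i, (c i / dot2 ψ (γ i)) • γ i

/-- A star configuration is symmetric if `m = 2k` and, after re-indexing by a
permutation, `γᵢ = -γ_{k+i}` and `cᵢ = -c_{k+i}` for `i = 1, …, k`. -/
def StarSymmetric (m : ℕ) (γ : Fin m → ℝ × ℝ) (c : Fin m → ℝ) : Prop :=
  ∃ k : ℕ, ∃ hk : m = 2 * k, ∃ σ : Equiv.Perm (Fin m),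
    ∀ i : Fin m, ∀ hi : (i : ℕ) < k,
      γ (σ i) = - γ (σ ⟨(i : ℕ) + k, by omega⟩) ∧
      c (σ i) = - c (σ ⟨(i : ℕ) + k, by omega⟩)

/-!
Differentiating under the integral, `∂₁ X¹_u (f·u^⊥) = X¹_u (∂₁ (f·u^⊥))`, and pointwise
`∂₁ (f·u^⊥) = D_u f₂ - u₂ div f`. Along the beam, `t ↦ t f₂(x + t u)` vanishes at `0` and for
large `t` and has derivative `f₂(x + t u) + t D_u f₂(x + t u)`, so `X¹_u (D_u f₂) = - X_u f₂`.
Subtracting the identities for `u` and `v` gives the theorem.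
-/

open Set Filter Topology Metric
open scoped Pointwise

section Ray

variable {E : Type*} [NormedAddCommGroup E] [NormedSpace ℝ E] {u : E}

theorem isClosedEmbedding_add_smul (hu : u ≠ 0) (x : E) :
    IsClosedEmbedding fun t : ℝ => x + t • u :=
  (Homeomorph.addLeft x).isClosedEmbedding.comp (isClosedEmbedding_smul_left hu)

theorem HasCompactSupport.comp_add_smul {F : Type*} [Zero F] {h : E → F}
    (hh : HasCompactSupport h) (hu : u ≠ 0) (x : E) :
    HasCompactSupport fun t : ℝ => h (x + t • u) :=
  hh.comp_isClosedEmbedding (isClosedEmbedding_add_smul hu x)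

theorem continuous_comp_add_smul {F : Type*} [TopologicalSpace F] {h : E → F}
    (hh : Continuous h) (u x : E) : Continuous fun t : ℝ => h (x + t • u) := by
  fun_prop

theorem integrable_comp_add_smul {h : E → ℝ} (hh : Continuous h) (hhc : HasCompactSupport h)
    (hu : u ≠ 0) (x : E) : Integrable fun t : ℝ => h (x + t • u) :=
  (continuous_comp_add_smul hh u x).integrable_of_hasCompactSupport (hhc.comp_add_smul hu x)

theorem integrable_mul_comp_add_smul {h : E → ℝ} (hh : Continuous h)
    (hhc : HasCompactSupport h) (hu : u ≠ 0) (x : E) :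
    Integrable fun t : ℝ => t * h (x + t • u) :=
  (continuous_id.mul (continuous_comp_add_smul hh u x)).integrable_of_hasCompactSupport
    (hhc.comp_add_smul hu x).mul_left

end Ray

section FirstMoment

variable {g : ℝ × ℝ → ℝ} {u : ℝ × ℝ}

theorem hasFDerivAt_Xmom (hg : ContDiff ℝ 1 g) (hgc : HasCompactSupport g) (hu : u ≠ 0)
    (x₀ : ℝ × ℝ) :
    HasFDerivAt (Xmom u g) (∫ t in Ioi (0 : ℝ), t • fderiv ℝ g (x₀ + t • u)) x₀ := by
  set S : Set ℝ := (fun t : ℝ => t • u) ⁻¹' (tsupport g + closedBall (-x₀) 1)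
  have hS : IsCompact S := (isClosedEmbedding_smul_left hu).isCompact_preimage
    (hgc.isCompact.add (isCompact_closedBall (-x₀) 1))
  have hoff : ∀ x ∈ ball x₀ 1, ∀ t ∉ S, x + t • u ∉ tsupport g := fun x hx t ht hmem =>
    ht ⟨x + t • u, hmem, -x, by simpa [dist_neg_neg] using ball_subset_closedBall hx,
      add_neg_cancel_comm x (t • u)⟩
  obtain ⟨C, hC⟩ := (hgc.fderiv ℝ).exists_bound_of_continuous (hg.continuous_fderiv one_ne_zero)
  refine hasFDerivAt_integral_of_dominated_of_fderiv_le
    (F := fun x t => t * g (x + t • u)) (F' := fun x t => t • fderiv ℝ g (x + t • u))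
    (bound := S.indicator fun t => |t| * C) (ball_mem_nhds x₀ one_pos)
    (Eventually.of_forall fun x =>
      (continuous_id.mul (continuous_comp_add_smul hg.continuous u x)).aestronglyMeasurable)
    (integrable_mul_comp_add_smul hg.continuous hgc hu x₀).restrict
    ((continuous_id.smul (continuous_comp_add_smul (hg.continuous_fderiv one_ne_zero) u x₀)
      ).aestronglyMeasurable)
    (Eventually.of_forall fun t x hx => ?_)
    ((ContinuousOn.integrableOn_compact hS (by fun_prop)).integrable_indicator
      hS.measurableSet).restrict
    (Eventually.of_forall fun t x _ => ?_)
  · by_cases ht : t ∈ S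
    · rw [indicator_of_mem ht, norm_smul, Real.norm_eq_abs]
      exact mul_le_mul_of_nonneg_left (hC _) (abs_nonneg t)
    · rw [indicator_of_notMem ht, fderiv_of_notMem_tsupport ℝ (hoff x hx t ht), smul_zero,
        norm_zero]
  · exact ((hg.differentiable one_ne_zero _).hasFDerivAt.comp x
      ((hasFDerivAt_id x).add_const (t • u))).const_mul t

theorem fderiv_Xmom_apply (hg : ContDiff ℝ 1 g) (hgc : HasCompactSupport g) (hu : u ≠ 0)
    (x w : ℝ × ℝ) : fderiv ℝ (Xmom u g) x w = Xmom u (fun y => fderiv ℝ g y w) x := by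
  have hint : Integrable fun t : ℝ => t • fderiv ℝ g (x + t • u) :=
    (continuous_id.smul (continuous_comp_add_smul (hg.continuous_fderiv one_ne_zero) u x))
      |>.integrable_of_hasCompactSupport ((hgc.fderiv ℝ).comp_add_smul hu x).smul_left
  rw [(hasFDerivAt_Xmom hg hgc hu x).fderiv, ContinuousLinearMap.integral_apply hint.restrict]
  rfl

theorem Xmom_Ddir_eq_neg_Xbeam (hg : ContDiff ℝ 1 g) (hgc : HasCompactSupport g) (hu : u ≠ 0)
    (x : ℝ × ℝ) : Xmom u (Ddir u g) x = - Xbeam u g x := by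
  set k : ℝ → ℝ := fun t => t * g (x + t • u)
  have hk : ContDiff ℝ 1 k := contDiff_id.mul (hg.comp (by fun_prop))
  have hkc : HasCompactSupport k := (hgc.comp_add_smul hu x).mul_left
  have hderiv : ∀ t, deriv k t = g (x + t • u) + t * Ddir u g (x + t • u) := fun t => by
    have hray : HasDerivAt (fun s : ℝ => x + s • u) u t := by
      simpa using ((hasDerivAt_id t).smul_const u).const_add x
    simpa [Ddir] using ((hasDerivAt_id' t).fun_mul
      ((hg.differentiable one_ne_zero _).hasFDerivAt.comp_hasDerivAt t hray)).deriv
  have hFTC : ∫ t in Ioi (0 : ℝ), deriv k t = 0 := by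
    simp [hkc.integral_Ioi_deriv_eq hk 0, k]
  simp only [hderiv] at hFTC
  rw [integral_add (integrable_comp_add_smul hg.continuous hgc hu x).restrict
    (integrable_mul_comp_add_smul (h := Ddir u g)
      ((hg.continuous_fderiv one_ne_zero).clm_apply continuous_const)
      (hgc.fderiv_apply ℝ u) hu x).restrict] at hFTC
  rw [Xmom, Xbeam]
  linarith

end FirstMoment

theorem fderiv_dot_perp_apply_one_zero {f₁ f₂ : ℝ × ℝ → ℝ} {y : ℝ × ℝ}
    (hf₁ : DifferentiableAt ℝ f₁ y) (hf₂ : DifferentiableAt ℝ f₂ y) (u : ℝ × ℝ) :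
    fderiv ℝ (fun z => f₁ z * (perp2 u).1 + f₂ z * (perp2 u).2) y (1, 0)
      = Ddir u f₂ y - u.2 * divf f₁ f₂ y := by
  have hDdir : fderiv ℝ f₂ y u = u.1 * fderiv ℝ f₂ y (1, 0) + u.2 * fderiv ℝ f₂ y (0, 1) := by
    conv_lhs => rw [show u = u.1 • ((1 : ℝ), (0 : ℝ)) + u.2 • ((0 : ℝ), (1 : ℝ)) by simp]
    rw [map_add, map_smul, map_smul, smul_eq_mul, smul_eq_mul]
  rw [fderiv_fun_add (hf₁.mul_const _) (hf₂.mul_const _), fderiv_mul_const hf₁,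
    fderiv_mul_const hf₂, Ddir, divf, hDdir]
  simp only [perp2, _root_.add_apply, _root_.smul_apply, smul_eq_mul]
  ring

theorem fderiv_Xmom_dot_perp_apply_one_zero {f₁ f₂ : ℝ × ℝ → ℝ}
    (hf₁ : ContDiff ℝ 1 f₁) (hf₁c : HasCompactSupport f₁)
    (hf₂ : ContDiff ℝ 1 f₂) (hf₂c : HasCompactSupport f₂) {u : ℝ × ℝ} (hu : u ≠ 0)
    (x : ℝ × ℝ) :
    fderiv ℝ (Xmom u fun y => f₁ y * (perp2 u).1 + f₂ y * (perp2 u).2) x (1, 0)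
      = - Xbeam u f₂ x - u.2 * Xmom u (divf f₁ f₂) x := by
  have hdiv : Continuous (divf f₁ f₂) :=
    ((hf₁.continuous_fderiv one_ne_zero).clm_apply continuous_const).add
      ((hf₂.continuous_fderiv one_ne_zero).clm_apply continuous_const)
  have hdivc : HasCompactSupport (divf f₁ f₂) :=
    (hf₁c.fderiv_apply ℝ _).add (hf₂c.fderiv_apply ℝ _)
  have hpt : (fun y => fderiv ℝ (fun z => f₁ z * (perp2 u).1 + f₂ z * (perp2 u).2) y (1, 0))
      = fun y => Ddir u f₂ y - u.2 * divf f₁ f₂ y := funext fun y =>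
    fderiv_dot_perp_apply_one_zero (hf₁.differentiable one_ne_zero y)
      (hf₂.differentiable one_ne_zero y) u
  rw [fderiv_Xmom_apply ((hf₁.mul contDiff_const).add (hf₂.mul contDiff_const))
    (hf₁c.mul_right.add hf₂c.mul_right) hu, hpt, ← Xmom_Ddir_eq_neg_Xbeam hf₂ hf₂c hu]
  simp only [Xmom, mul_sub, mul_left_comm _ u.2]
  rw [integral_sub
    (integrable_mul_comp_add_smul (h := Ddir u f₂)
      ((hf₂.continuous_fderiv one_ne_zero).clm_apply continuous_const)
      (hf₂c.fderiv_apply ℝ u) hu x).restrict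
    ((integrable_mul_comp_add_smul hdiv hdivc hu x).const_mul u.2).restrict,
    integral_const_mul]

theorem stmt11_general (u v : ℝ × ℝ) (hu : u.1 ^ 2 + u.2 ^ 2 = 1) (hv : v.1 ^ 2 + v.2 ^ 2 = 1)
    (f₁ f₂ : ℝ × ℝ → ℝ) (hf₁ : IsC2c f₁) (hf₂ : IsC2c f₂) (x : ℝ × ℝ) :
    Xbeam u f₂ x - Xbeam v f₂ x
      = fderiv ℝ (VmomT u v f₁ f₂) x (1, 0)
        - u.2 * Xmom u (divf f₁ f₂) x + v.2 * Xmom v (divf f₁ f₂) x := by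
  obtain ⟨hf₁, hf₁c⟩ := hf₁
  obtain ⟨hf₂, hf₂c⟩ := hf₂
  replace hf₁ : ContDiff ℝ 1 f₁ := hf₁.of_le one_le_two
  replace hf₂ : ContDiff ℝ 1 f₂ := hf₂.of_le one_le_two
  have hne : ∀ w : ℝ × ℝ, w.1 ^ 2 + w.2 ^ 2 = 1 → w ≠ 0 := by
    rintro w hw rfl
    simp at hw
  have hdiff : ∀ w : ℝ × ℝ, w ≠ 0 →
      DifferentiableAt ℝ (Xmom w fun y => f₁ y * (perp2 w).1 + f₂ y * (perp2 w).2) x :=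
    fun w hw => (hasFDerivAt_Xmom ((hf₁.mul contDiff_const).add (hf₂.mul contDiff_const))
      (hf₁c.mul_right.add hf₂c.mul_right) hw x).differentiableAt
  have hJ := fderiv_fun_add (hdiff u (hne u hu)).fun_neg (hdiff v (hne v hv))
  rw [fderiv_fun_neg] at hJ
  unfold VmomT
  rw [hJ, _root_.add_apply, _root_.neg_apply,
    fderiv_Xmom_dot_perp_apply_one_zero hf₁ hf₁c hf₂ hf₂c (hne u hu),
    fderiv_Xmom_dot_perp_apply_one_zero hf₁ hf₁c hf₂ hf₂c (hne v hv)]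
  ring

/-- `X_u f₂ - X_v f₂ = ∂(J f)/∂x₁ - u₂ X¹_u(div f) + v₂ X¹_v(div f)`. -/
theorem stmt11 (u v : ℝ × ℝ) (hu : u.1 ^ 2 + u.2 ^ 2 = 1) (hv : v.1 ^ 2 + v.2 ^ 2 = 1)
    (huv : LinearIndependent ℝ ![u, v])
    (f₁ f₂ : ℝ × ℝ → ℝ) (hf₁ : IsC2c f₁) (hf₂ : IsC2c f₂) (x : ℝ × ℝ) :
    Xbeam u f₂ x - Xbeam v f₂ x
      = fderiv ℝ (VmomT u v f₁ f₂) x (1, 0)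
        - u.2 * Xmom u (divf f₁ f₂) x + v.2 * Xmom v (divf f₁ f₂) x :=
  stmt11_general u v hu hv f₁ f₂ hf₁ hf₂ x
end
end

section
/- Let u, v be linearly independent unit vectors in ℝ² and let f = (f₁, f₂) be a vector field on ℝ² with f₁, f₂ ∈ C²_c(ℝ²). If T f(x) = 0 and J f(x) = 0 for all x ∈ ℝ², then f = 0 identically. That is, a compactly supported C² vector field is uniquely determined by its transverse V-line transform together with its first moment transverse V-line transform. -/
/-! Write `g_w := f · w^⊥`, so the hypotheses say `Φ := X_u g_u = X_v g_v` and
`Ψ := X¹_u g_u = X¹_v g_v`. Along rays, `D_u (X_u g) = -g` and `D_u (X¹_u g) = -X_u g`; hence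
`D_u Ψ = D_v Ψ = -Φ`, `D_u Φ = -g_u` and `D_v Φ = -g_v`. Mixed directional derivatives commute
(the mean value theorem applied twice to a second difference needs only derivatives along lines,
not differentiability of `Φ` or `Ψ`). For `Ψ` this gives `g_u = g_v`, and then for `Φ` it gives
`D_v g_u = D_u g_u`. So `g_u` is constant along the direction `u - v`, hence zero by compact
support, and `f = 0` because `u^⊥` and `v^⊥` are linearly independent. -/

open MeasureTheory Matrix

noncomputable section

open Set Filter Topology

section TailIntegral

variable {E : Type*} [NormedAddCommGroup E] [NormedSpace ℝ E]

theorem setIntegral_Ioi_zero_comp_const_add (φ : ℝ → E) (a : ℝ) :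
    ∫ s in Ioi 0, φ (a + s) = ∫ s in Ioi a, φ s := by
  rw [← (measurePreserving_add_left volume a).setIntegral_image_emb
    (MeasurableEquiv.addLeft a).measurableEmbedding φ (Ioi 0), image_const_add_Ioi, add_zero]

theorem hasDerivAt_setIntegral_Ioi [CompleteSpace E] {φ : ℝ → E} (hφ : Continuous φ)
    (hφi : Integrable φ) (a : ℝ) :
    HasDerivAt (fun b => ∫ t in Ioi b, φ t) (-φ a) a := by
  have hsplit :
      (fun b => ∫ t in Ioi b, φ t) = fun b => (∫ t in b..a, φ t) + ∫ t in Ioi a, φ t :=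
    funext fun b =>
      (intervalIntegral.integral_interval_add_Ioi hφi.integrableOn hφi.integrableOn).symm
  rw [hsplit]
  exact (intervalIntegral.integral_hasDerivAt_left (hφ.intervalIntegrable _ _)
    (hφ.stronglyMeasurableAtFilter _ _) hφ.continuousAt).add_const _

theorem hasDerivAt_setIntegral_Ioi_sub_mul {φ : ℝ → ℝ} (hφ : Continuous φ) (hφi : Integrable φ)
    (hφi' : Integrable fun t => t * φ t) (a : ℝ) :
    HasDerivAt (fun b => ∫ t in Ioi b, (t - b) * φ t) (-∫ t in Ioi a, φ t) a := by
  have hsplit : (fun b => ∫ t in Ioi b, (t - b) * φ t) =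
      fun b => (∫ t in Ioi b, t * φ t) - b * ∫ t in Ioi b, φ t := by
    funext b
    simp_rw [sub_mul]
    rw [integral_sub hφi'.integrableOn (hφi.integrableOn.const_mul b),
      MeasureTheory.integral_const_mul]
  rw [hsplit]
  exact ((hasDerivAt_setIntegral_Ioi (continuous_id'.mul hφ) hφi' a).sub
    ((hasDerivAt_id' a).mul (hasDerivAt_setIntegral_Ioi hφ hφi a))).congr_deriv
    (by simp only [Pi.mul_apply]; ring)

end TailIntegral

section LineDerivative

variable {E F : Type*} [NormedAddCommGroup E] [NormedSpace ℝ E]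

theorem HasCompactSupport.comp_const_add_smul [Zero F] [TopologicalSpace F] {h : E → F}
    (hh : HasCompactSupport h) (x : E) {w : E} (hw : w ≠ 0) :
    HasCompactSupport fun t : ℝ => h (x + t • w) :=
  hh.comp_isClosedEmbedding
    ((Homeomorph.addLeft x).isClosedEmbedding.comp (isClosedEmbedding_smul_left hw))

theorem hasDerivAt_comp_const_add_smul [NormedAddCommGroup F] [NormedSpace ℝ F] {f f' : E → F}
    {w : E} (hf : ∀ x, HasLineDerivAt ℝ f (f' x) x w) (x : E) (s : ℝ) :
    HasDerivAt (fun t => f (x + t • w)) (f' (x + s • w)) s := by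
  have := HasDerivAt.comp_sub_const s s (by rw [sub_self]; exact hf (x + s • w))
  convert this using 2 with t
  rw [sub_smul, add_add_sub_cancel]

theorem HasLineDerivAt.neg [NormedAddCommGroup F] [NormedSpace ℝ F] {f : E → F} {f' : F}
    {x w : E} (hf : HasLineDerivAt ℝ f f' x w) : HasLineDerivAt ℝ (fun y => -f y) (-f') x w :=
  HasDerivAt.neg hf

end LineDerivative

section Clairaut

variable {E : Type*} [NormedAddCommGroup E] [NormedSpace ℝ E]

theorem exists_secondDifference_eq_sq_mul {Φ p p' : E → ℝ} {u v : E}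
    (hΦ : ∀ x, HasLineDerivAt ℝ Φ (p x) x u) (hp : ∀ x, HasLineDerivAt ℝ p (p' x) x v)
    (y : E) {ε : ℝ} (hε : 0 < ε) :
    ∃ a ∈ Ioo 0 ε, ∃ b ∈ Ioo 0 ε,
      Φ (y + ε • u + ε • v) - Φ (y + ε • u) - Φ (y + ε • v) + Φ y =
        ε ^ 2 * p' (y + a • u + b • v) := by
  have hΦ' := hasDerivAt_comp_const_add_smul hΦ
  have hp' := hasDerivAt_comp_const_add_smul hp
  obtain ⟨a, ha, hslope_a⟩ := exists_hasDerivAt_eq_slope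
    (fun s => Φ (y + ε • v + s • u) - Φ (y + s • u))
    (fun s => p (y + ε • v + s • u) - p (y + s • u)) hε
    (fun s _ => ((hΦ' _ s).sub (hΦ' _ s)).continuousAt.continuousWithinAt)
    (fun s _ => (hΦ' _ s).sub (hΦ' _ s))
  obtain ⟨b, hb, hslope_b⟩ := exists_hasDerivAt_eq_slope
    (fun r => p (y + a • u + r • v)) (fun r => p' (y + a • u + r • v)) hε
    (fun r _ => (hp' _ r).continuousAt.continuousWithinAt) (fun r _ => hp' _ r)
  refine ⟨a, ha, b, hb, ?_⟩
  simp only [zero_smul, add_zero, sub_zero] at hslope_a hslope_b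
  rw [add_right_comm y (ε • v) (ε • u), add_right_comm y (ε • v) (a • u)] at hslope_a
  rw [hslope_b, hslope_a]
  field_simp
  ring

theorem second_lineDeriv_symmetric {Φ p q p' q' : E → ℝ} {u v : E}
    (hΦu : ∀ x, HasLineDerivAt ℝ Φ (p x) x u) (hΦv : ∀ x, HasLineDerivAt ℝ Φ (q x) x v)
    (hp : ∀ x, HasLineDerivAt ℝ p (p' x) x v) (hq : ∀ x, HasLineDerivAt ℝ q (q' x) x u)
    {y : E} (hp'y : ContinuousAt p' y) (hq'y : ContinuousAt q' y) : p' y = q' y := by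
  set m : ℝ × ℝ → E := fun ab => y + ab.1 • u + ab.2 • v
  have hm : Tendsto m (𝓝 0) (𝓝 y) := by
    simpa [m] using ((by fun_prop : Continuous m).tendsto 0)
  have hfreq : ∃ᶠ z in 𝓝 (0 : (ℝ × ℝ) × (ℝ × ℝ)), p' (m z.1) = q' (m z.2) := by
    refine Metric.nhds_basis_ball.frequently_iff.2 fun ε hε => ?_
    obtain ⟨a, ha, b, hb, hab⟩ := exists_secondDifference_eq_sq_mul hΦu hp y hε
    obtain ⟨d, hd, c, hc, hdc⟩ := exists_secondDifference_eq_sq_mul hΦv hq y hε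
    refine ⟨((a, b), (c, d)), ?_, mul_left_cancel₀ (pow_pos hε 2).ne' ?_⟩
    · simp only [Metric.mem_ball, dist_zero_right, Prod.norm_def, Real.norm_eq_abs, max_lt_iff]
      simp only [mem_Ioo] at ha hb hc hd
      refine ⟨⟨?_, ?_⟩, ?_, ?_⟩ <;> rw [abs_lt] <;> constructor <;> linarith
    · rw [← hab, show m (c, d) = y + d • v + c • u from add_right_comm .., ← hdc,
        add_right_comm y (ε • v) (ε • u)]
      ring
  exact tendsto_nhds_unique_of_frequently_eq
    (hp'y.tendsto.comp (hm.comp (continuous_fst.tendsto' 0 0 rfl)))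
    (hq'y.tendsto.comp (hm.comp (continuous_snd.tendsto' 0 0 rfl))) hfreq

end Clairaut

section BeamTransform

variable {u : ℝ × ℝ} {h : ℝ × ℝ → ℝ}

theorem Xbeam_add_smul (x : ℝ × ℝ) (t : ℝ) :
    Xbeam u h (x + t • u) = ∫ s in Ioi t, h (x + s • u) := by
  rw [Xbeam, ← setIntegral_Ioi_zero_comp_const_add (fun s => h (x + s • u)) t]
  simp_rw [add_smul, add_assoc]

theorem Xmom_add_smul (x : ℝ × ℝ) (t : ℝ) :
    Xmom u h (x + t • u) = ∫ s in Ioi t, (s - t) * h (x + s • u) := by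
  rw [Xmom, ← setIntegral_Ioi_zero_comp_const_add (fun s => (s - t) * h (x + s • u)) t]
  simp_rw [add_sub_cancel_left, add_smul, add_assoc]

theorem hasLineDerivAt_Xbeam (hc : Continuous h) (hs : HasCompactSupport h) (hu : u ≠ 0)
    (x : ℝ × ℝ) : HasLineDerivAt ℝ (Xbeam u h) (-h x) x u := by
  have hφ : Continuous fun s : ℝ => h (x + s • u) := by fun_prop
  have hd := hasDerivAt_setIntegral_Ioi hφ
    (hφ.integrable_of_hasCompactSupport (hs.comp_const_add_smul x hu)) 0
  simp_rw [HasLineDerivAt, Xbeam_add_smul]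
  simpa using hd

theorem hasLineDerivAt_Xmom (hc : Continuous h) (hs : HasCompactSupport h) (hu : u ≠ 0)
    (x : ℝ × ℝ) : HasLineDerivAt ℝ (Xmom u h) (-Xbeam u h x) x u := by
  have hφ : Continuous fun s : ℝ => h (x + s • u) := by fun_prop
  have hφs := hs.comp_const_add_smul x hu
  have hd := hasDerivAt_setIntegral_Ioi_sub_mul hφ (hφ.integrable_of_hasCompactSupport hφs)
    ((continuous_id.mul hφ).integrable_of_hasCompactSupport hφs.mul_left) 0
  simp_rw [HasLineDerivAt, Xmom_add_smul]
  simpa [Xbeam] using hd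

end BeamTransform

theorem HasCompactSupport.eq_zero_of_fderiv_apply_eq_zero {E : Type*} [NormedAddCommGroup E]
    [NormedSpace ℝ E] {g : E → ℝ} (hs : HasCompactSupport g) (hg : Differentiable ℝ g) {w : E}
    (hw : w ≠ 0) (hgw : ∀ x, fderiv ℝ g x w = 0) (x : E) : g x = 0 := by
  have hline : ∀ t, HasDerivAt (fun t : ℝ => g (x + t • w)) 0 t := by
    intro t
    simpa [hgw] using hasDerivAt_comp_const_add_smul
      (fun z => (hg z).hasFDerivAt.hasLineDerivAt w) x t
  have hconst : (fun t : ℝ => g (x + t • w)) = fun _ => g x := by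
    funext t
    simpa using is_const_of_deriv_eq_zero (fun t => (hline t).differentiableAt)
      (fun t => (hline t).deriv) t 0
  have hzero := (hs.comp_const_add_smul x hw).is_zero_at_infty
  rw [hconst] at hzero
  exact tendsto_nhds_unique tendsto_const_nhds hzero

theorem eq_zero_of_Xbeam_eq_of_Xmom_eq {u v : ℝ × ℝ} (hu : u ≠ 0) (hv : v ≠ 0) (huv : u ≠ v)
    {h₁ h₂ : ℝ × ℝ → ℝ} (hh₁ : ContDiff ℝ 1 h₁) (hs₁ : HasCompactSupport h₁)
    (hh₂ : Continuous h₂) (hs₂ : HasCompactSupport h₂)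
    (hX : Xbeam u h₁ = Xbeam v h₂) (hXm : Xmom u h₁ = Xmom v h₂) : h₁ = 0 ∧ h₂ = 0 := by
  have hΦu : ∀ x, HasLineDerivAt ℝ (Xbeam u h₁) (-h₁ x) x u :=
    hasLineDerivAt_Xbeam hh₁.continuous hs₁ hu
  have hΦv : ∀ x, HasLineDerivAt ℝ (Xbeam u h₁) (-h₂ x) x v :=
    hX ▸ hasLineDerivAt_Xbeam hh₂ hs₂ hv
  have hΨu : ∀ x, HasLineDerivAt ℝ (Xmom u h₁) (-Xbeam u h₁ x) x u :=
    hasLineDerivAt_Xmom hh₁.continuous hs₁ hu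
  have hΨv : ∀ x, HasLineDerivAt ℝ (Xmom u h₁) (-Xbeam u h₁ x) x v := by
    rw [hXm, hX]
    exact hasLineDerivAt_Xmom hh₂ hs₂ hv
  obtain rfl : h₁ = h₂ := funext fun x => Eq.symm <|
    second_lineDeriv_symmetric hΨu hΨv
      (fun x => by simpa only [neg_neg] using (hΦv x).neg)
      (fun x => by simpa only [neg_neg] using (hΦu x).neg)
      hh₂.continuousAt hh₁.continuous.continuousAt
  have hDh : ∀ w x, HasLineDerivAt ℝ (fun z => -h₁ z) (-fderiv ℝ h₁ x w) x w := fun w x =>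
    ((hh₁.differentiable one_ne_zero x).hasFDerivAt.hasLineDerivAt w).neg
  have hDh_cont : ∀ w, Continuous fun x => -fderiv ℝ h₁ x w := fun w =>
    ((hh₁.continuous_fderiv one_ne_zero).clm_apply continuous_const).neg
  have hcomm : ∀ x, fderiv ℝ h₁ x (u - v) = 0 := fun x => by
    have := second_lineDeriv_symmetric hΦu hΦv (hDh v) (hDh u)
      (hDh_cont v).continuousAt (hDh_cont u).continuousAt (y := x)
    rw [map_sub, neg_inj.1 this, sub_self]
  have hzero : h₁ = 0 :=
    funext (hs₁.eq_zero_of_fderiv_apply_eq_zero (hh₁.differentiable one_ne_zero)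
      (sub_ne_zero.2 huv) hcomm)
  exact ⟨hzero, hzero⟩

theorem eq_zero_of_perp_combination_eq_zero {u v : ℝ × ℝ} (huv : LinearIndependent ℝ ![u, v])
    {a b : ℝ} (hau : a * (perp2 u).1 + b * (perp2 u).2 = 0)
    (hav : a * (perp2 v).1 + b * (perp2 v).2 = 0) : a = 0 ∧ b = 0 := by
  have hdet : u.1 * v.2 - u.2 * v.1 ≠ 0 := by
    intro hdet
    obtain ⟨-, hu₂⟩ := LinearIndependent.pair_iff.1 huv v.2 (-u.2) (by
      ext <;> simp <;> linarith)
    obtain ⟨-, hu₁⟩ := LinearIndependent.pair_iff.1 huv v.1 (-u.1) (by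
      ext <;> simp <;> linarith)
    exact huv.ne_zero 0 (Prod.ext (neg_eq_zero.1 hu₁) (neg_eq_zero.1 hu₂))
  simp only [perp2] at hau hav
  exact ⟨mul_left_cancel₀ hdet (by linear_combination v.1 * hau - u.1 * hav),
    mul_left_cancel₀ hdet (by linear_combination v.2 * hau - u.2 * hav)⟩

theorem stmt13_general (u v : ℝ × ℝ)
    (huv : LinearIndependent ℝ ![u, v])
    (f₁ f₂ : ℝ × ℝ → ℝ) (hf₁ : IsC2c f₁) (hf₂ : IsC2c f₂)
    (hT : ∀ x, VlineT u v f₁ f₂ x = 0) (hJ : ∀ x, VmomT u v f₁ f₂ x = 0) :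
    ∀ x, f₁ x = 0 ∧ f₂ x = 0 := by
  have hC1 : ∀ w : ℝ × ℝ, ContDiff ℝ 1 fun y => f₁ y * (perp2 w).1 + f₂ y * (perp2 w).2 :=
    fun w => ((hf₁.1.mul contDiff_const).add (hf₂.1.mul contDiff_const)).of_le (by norm_num)
  have hsupp :
      ∀ w : ℝ × ℝ, HasCompactSupport fun y => f₁ y * (perp2 w).1 + f₂ y * (perp2 w).2 :=
    fun w => hf₁.2.mul_right.add hf₂.2.mul_right
  obtain ⟨hgu, hgv⟩ := eq_zero_of_Xbeam_eq_of_Xmom_eq (huv.ne_zero 0) (huv.ne_zero 1)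
    (by simpa using huv.injective.ne zero_ne_one) (hC1 u) (hsupp u) (hC1 v).continuous (hsupp v)
    (funext fun x => neg_add_eq_zero.1 (hT x)) (funext fun x => neg_add_eq_zero.1 (hJ x))
  exact fun x => eq_zero_of_perp_combination_eq_zero huv (congr_fun hgu x) (congr_fun hgv x)

/-- `T f ≡ 0` and `J f ≡ 0` imply `f ≡ 0`. -/
theorem stmt13 (u v : ℝ × ℝ) (hu : u.1 ^ 2 + u.2 ^ 2 = 1) (hv : v.1 ^ 2 + v.2 ^ 2 = 1)
    (huv : LinearIndependent ℝ ![u, v])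
    (f₁ f₂ : ℝ × ℝ → ℝ) (hf₁ : IsC2c f₁) (hf₂ : IsC2c f₂)
    (hT : ∀ x, VlineT u v f₁ f₂ x = 0) (hJ : ∀ x, VmomT u v f₁ f₂ x = 0) :
    ∀ x, f₁ x = 0 ∧ f₂ x = 0 :=
  stmt13_general u v huv f₁ f₂ hf₁ hf₂ hT hJ
end
end
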